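/- (Equivalence of continuous and dyadic amalgam norms.) Let (X,d,μ) be a space of homogeneous type satisfying the standing assumptions, 1 ≤ q ≤ α ≤ p ≤ ∞, r > 0, and let m_r be the unique integer with ρ^{m_r+1} ≤ r/(2κ) < ρ^{m_r+2}. Define the dyadic norm ‖f‖^{d m_r}_{q,p,α} = ( Σ_j ( μ(E^{m_r}_j)^{1/α − 1/q} ‖f·χ_{E^{m_r}_j}‖_{L^q} )^p )^{1/p} (sup over j for p = ∞), the sum over dyadic cubes of generation m_r. Then there are constants C₁, C₂ > 0 independent of f and r such that C₁ · _r‖f‖_{q,p,α} ≤ ‖f‖^{d m_r}_{q,p,α} ≤ C₂ · _r‖f‖_{q,p,α}. -/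

import Mathlib

/-
The generation `m_r` is chosen so that every cube fits inside the `r`-ball around each of its
points, while every `r`-ball meeting a cube `E_j` lies in a ball about the centre of `E_j` whose
radius is at most `2 ^ L` times the inner radius `ρ ^ m_r`, with `L` depending only on `κ` and `ρ`.
By doubling, a cube and an `r`-ball meeting it have comparable measures, and since the cubes are
disjoint and each contains a ball of radius `ρ ^ m_r`, an `r`-ball meets boundedly many cubes.
As `1 ≤ q ≤ α ≤ p`, the exponents of the weights lie in `[-1, 1]`, so the weights `μ(·) ^ e` are
comparable too.
The dyadic sum is then the integral of a function that is constant on each cube and dominated by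
the continuous integrand. Conversely, the continuous integrand at `y` is controlled by the
boundedly many cube terms meeting `B(y, r)`, and integrating in `y` charges each cube term only
on the ball `B(c_j, 2κr)`, whose measure is comparable to `μ(E_j)`.
-/

open MeasureTheory Set ENNReal Filter

noncomputable section

variable {X : Type*}

def qball (d : X → X → ℝ) (x : X) (r : ℝ) : Set X := {y | d x y < r}

/-- `1 / p.toReal` encodes `1 / p` with the convention `1 / ∞ = 0`. -/
def amalgamNorm [MeasurableSpace X] (μ : Measure X) (d : X → X → ℝ)
    (q p α : ℝ≥0∞) (r : ℝ) (f : X → ℂ) : ℝ≥0∞ :=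
  if p = ∞ then
    ⨆ y : X, μ (qball d y r) ^ (1 / α.toReal - 1 / q.toReal) *
      eLpNorm ((qball d y r).indicator f) q μ
  else
    (∫⁻ y, (μ (qball d y r) ^ (1 / α.toReal - 1 / p.toReal - 1 / q.toReal) *
      eLpNorm ((qball d y r).indicator f) q μ) ^ p.toReal ∂μ) ^ (1 / p.toReal)

def dyadicAmalgamNorm [MeasurableSpace X] (μ : Measure X) {ι : Type*}
    (E : ι → Set X) (q p α : ℝ≥0∞) (f : X → ℂ) : ℝ≥0∞ :=
  if p = ∞ then
    ⨆ j : ι, μ (E j) ^ (1 / α.toReal - 1 / q.toReal) * eLpNorm ((E j).indicator f) q μ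
  else
    (∑' j : ι, (μ (E j) ^ (1 / α.toReal - 1 / q.toReal) *
      eLpNorm ((E j).indicator f) q μ) ^ p.toReal) ^ (1 / p.toReal)

theorem qball_mono {d : X → X → ℝ} {x : X} {s t : ℝ} (h : s ≤ t) :
    qball d x s ⊆ qball d x t :=
  fun _ hy => lt_of_lt_of_le hy h

theorem eLpNorm_indicator_le_of_subset [MeasurableSpace X] {μ : Measure X} {q : ℝ≥0∞}
    {A B : Set X} (hAB : A ⊆ B) (f : X → ℂ) :
    eLpNorm (A.indicator f) q μ ≤ eLpNorm (B.indicator f) q μ := by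
  rw [← inter_eq_left.2 hAB, ← indicator_indicator]
  exact eLpNorm_indicator_le _

namespace ENNReal

theorem rpow_le_mul_rpow_of_le_mul {a b K : ℝ≥0∞} {e : ℝ} (hK : 1 ≤ K) (hK' : K ≠ ∞)
    (hab : a ≤ K * b) (hba : b ≤ K * a) (he : |e| ≤ 1) : a ^ e ≤ K * b ^ e := by
  have hK0 : K ≠ 0 := (zero_lt_one.trans_le hK).ne'
  suffices a ^ e ≤ K ^ |e| * b ^ e by
    refine this.trans (mul_le_mul_left ?_ _)
    simpa using rpow_le_rpow_of_exponent_le hK he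
  rcases le_or_gt 0 e with he0 | he0
  · rw [abs_of_nonneg he0, ← mul_rpow_of_nonneg _ _ he0]
    exact rpow_le_rpow hab he0
  · -- for a negative exponent, compare the reciprocals instead
    have hinv : a⁻¹ ≤ K * b⁻¹ := by
      calc a⁻¹ ≤ (K⁻¹ * b)⁻¹ := ENNReal.inv_le_inv.2 ((ENNReal.inv_mul_le_iff hK0 hK').2 hba)
        _ = K * b⁻¹ := by
          rw [ENNReal.mul_inv (.inl (ENNReal.inv_ne_zero.2 hK')) (.inl (ENNReal.inv_ne_top.2 hK0)),
            inv_inv]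
    have hinv_rpow : ∀ x : ℝ≥0∞, x ^ e = x⁻¹ ^ (-e) := fun x => by
      rw [inv_rpow, ← rpow_neg, neg_neg]
    rw [abs_of_neg he0, hinv_rpow a, hinv_rpow b, ← mul_rpow_of_nonneg _ _ (neg_nonneg.2 he0.le)]
    exact rpow_le_rpow hinv (neg_nonneg.2 he0.le)

theorem rpow_add_one_div_mul_rpow {a b : ℝ≥0∞} {t p : ℝ} (ha : a ≠ 0) (ha' : a ≠ ∞) (hp : 0 < p) :
    (a ^ (t + 1 / p) * b) ^ p = a * (a ^ t * b) ^ p := by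
  rw [mul_rpow_of_nonneg _ _ hp.le, mul_rpow_of_nonneg _ _ hp.le, ← rpow_mul, ← rpow_mul, add_mul,
    one_div_mul_cancel hp.ne', rpow_add _ _ ha ha', rpow_one]
  ring

theorem rpow_mul_rpow_one_div {a b : ℝ≥0∞} {p : ℝ} (hp : 0 < p) :
    (a ^ p * b) ^ (1 / p) = a * b ^ (1 / p) := by
  rw [mul_rpow_of_nonneg _ _ (by positivity), ← rpow_mul, mul_one_div_cancel hp.ne', rpow_one]

theorem rpow_sum_le_mul_sum_rpow_of_card_le {ι : Type*} {s : Finset ι} {N : ℕ} (hN : 1 ≤ N)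
    (hs : s.card ≤ N) {p : ℝ} (hp : 1 ≤ p) (f : ι → ℝ≥0∞) :
    (∑ i ∈ s, f i) ^ p ≤ (N : ℝ≥0∞) ^ p * ∑ i ∈ s, f i ^ p := by
  refine (rpow_sum_le_const_mul_sum_rpow s f hp).trans (mul_le_mul_left ?_ _)
  calc (s.card : ℝ≥0∞) ^ (p - 1) ≤ (N : ℝ≥0∞) ^ (p - 1) := by gcongr
    _ ≤ (N : ℝ≥0∞) ^ p := rpow_le_rpow_of_exponent_le (by exact_mod_cast hN) (by linarith)

end ENNReal

theorem abs_amalgam_exponents_le {q p α : ℝ≥0∞} (hq : 1 ≤ q) (hqα : q ≤ α) (hαp : α ≤ p) :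
    |1 / α.toReal - 1 / q.toReal| ≤ 1 ∧ |1 / α.toReal - 1 / p.toReal - 1 / q.toReal| ≤ 1 := by
  simp only [one_div, ← ENNReal.toReal_inv]
  have hq1 : q⁻¹ ≤ 1 := ENNReal.inv_le_one.2 hq
  have hαq : α⁻¹ ≤ q⁻¹ := ENNReal.inv_le_inv.2 hqα
  have hq' := ENNReal.toReal_mono ENNReal.one_ne_top hq1
  have hα' := ENNReal.toReal_mono (ne_top_of_le_ne_top ENNReal.one_ne_top hq1) hαq
  have hp' := ENNReal.toReal_mono (ne_top_of_le_ne_top ENNReal.one_ne_top (hαq.trans hq1))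
    (ENNReal.inv_le_inv.2 hαp)
  have hp0 := ENNReal.toReal_nonneg (a := p⁻¹)
  rw [ENNReal.toReal_one] at hq'
  constructor <;> rw [abs_le] <;> constructor <;> linarith

theorem tsum_measure_mul_le_lintegral [MeasurableSpace X] {μ : Measure X} {ι : Type*}
    [Countable ι] {E : ι → Set X} (hE : ∀ j, MeasurableSet (E j))
    (hdisj : Pairwise (Function.onFun Disjoint E)) {g : ι → ℝ≥0∞} {h : X → ℝ≥0∞}
    (hgh : ∀ j, ∀ y ∈ E j, g j ≤ h y) :
    ∑' j, μ (E j) * g j ≤ ∫⁻ y, h y ∂μ :=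
  calc ∑' j, μ (E j) * g j = ∑' j, ∫⁻ _ in E j, g j ∂μ := by
        simp only [setLIntegral_const, mul_comm]
    _ ≤ ∑' j, ∫⁻ y in E j, h y ∂μ := ENNReal.tsum_le_tsum fun j => setLIntegral_mono' (hE j) (hgh j)
    _ = ∫⁻ y in ⋃ j, E j, h y ∂μ := (lintegral_iUnion hE hdisj h).symm
    _ ≤ ∫⁻ y, h y ∂μ := setLIntegral_le_lintegral _ _

theorem lintegral_finset_sum_le_tsum_measure_mul [MeasurableSpace X] {μ : Measure X} {ι : Type*}
    [Countable ι] {T : ι → Set X} (hT : ∀ j, MeasurableSet (T j)) {S : X → Finset ι}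
    (hS : ∀ y, ∀ j ∈ S y, y ∈ T j) (g : ι → ℝ≥0∞) :
    ∫⁻ y, ∑ j ∈ S y, g j ∂μ ≤ ∑' j, μ (T j) * g j :=
  calc ∫⁻ y, ∑ j ∈ S y, g j ∂μ ≤ ∫⁻ y, ∑' j, (T j).indicator (fun _ => g j) y ∂μ := by
        refine lintegral_mono fun y => ?_
        calc ∑ j ∈ S y, g j = ∑ j ∈ S y, (T j).indicator (fun _ => g j) y :=
              Finset.sum_congr rfl fun j hj => (indicator_of_mem (hS y j hj) (fun _ => g j)).symm
          _ ≤ _ := ENNReal.sum_le_tsum _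
    _ = ∑' j, μ (T j) * g j := by
        rw [lintegral_tsum fun j => (measurable_const.indicator (hT j)).aemeasurable]
        simp only [lintegral_indicator_const (hT _), mul_comm]

structure IsHomogeneousType [MeasurableSpace X] (μ : Measure X) (d : X → X → ℝ) (κ C : ℝ) :
    Prop where
  one_le_const : 1 ≤ κ
  symm : ∀ x y, d x y = d y x
  self : ∀ x, d x x = 0
  triangle : ∀ x y z, d x y ≤ κ * (d x z + d z y)
  measurableSet_qball : ∀ x r, MeasurableSet (qball d x r)
  measure_qball_pos : ∀ x r, 0 < r → 0 < μ (qball d x r)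
  measure_qball_lt_top : ∀ x r, μ (qball d x r) < ∞
  measure_qball_two_mul_le :
    ∀ x r, 0 < r → μ (qball d x (2 * r)) ≤ ENNReal.ofReal C * μ (qball d x r)

/-- One generation `m` of a dyadic decomposition, with `s = ρ ^ m` and `R = ρ ^ (m + 1)`. -/
structure IsCubeLayer [MeasurableSpace X] (d : X → X → ℝ) (s R : ℝ) {ι : Type*} (c : ι → X)
    (E : ι → Set X) : Prop where
  measurableSet : ∀ j, MeasurableSet (E j)
  qball_subset : ∀ j, qball d (c j) s ⊆ E j
  subset_qball : ∀ j, E j ⊆ qball d (c j) R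
  pairwise_disjoint : Pairwise (Function.onFun Disjoint E)
  iUnion_eq : ⋃ j, E j = univ

structure IsComparablePartition [MeasurableSpace X] (μ : Measure X) (d : X → X → ℝ) (r : ℝ)
    {ι : Type*} (E : ι → Set X) (N : ℕ) : Prop where
  one_le : 1 ≤ N
  measurableSet : ∀ j, MeasurableSet (E j)
  measurableSet_qball : ∀ y, MeasurableSet (qball d y r)
  pairwise_disjoint : Pairwise (Function.onFun Disjoint E)
  iUnion_eq : ⋃ j, E j = univ
  measure_ne_zero : ∀ j, μ (E j) ≠ 0
  measure_ne_top : ∀ j, μ (E j) ≠ ∞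
  subset_qball : ∀ j, ∀ y ∈ E j, E j ⊆ qball d y r
  measure_qball_le : ∀ y j, (E j ∩ qball d y r).Nonempty → μ (qball d y r) ≤ N * μ (E j)
  measure_le_qball : ∀ y j, (E j ∩ qball d y r).Nonempty → μ (E j) ≤ N * μ (qball d y r)
  card_le : ∀ y (S : Finset ι), (∀ j ∈ S, (E j ∩ qball d y r).Nonempty) → S.card ≤ N
  exists_superset_thickening : ∀ j, ∃ T, MeasurableSet T ∧
    (∀ y, (E j ∩ qball d y r).Nonempty → y ∈ T) ∧ μ T ≤ N * μ (E j)

namespace IsHomogeneousType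

variable [MeasurableSpace X] {μ : Measure X} {d : X → X → ℝ} {κ C : ℝ}

theorem mem_qball_comm (hX : IsHomogeneousType μ d κ C) {x y : X} {r : ℝ} :
    y ∈ qball d x r ↔ x ∈ qball d y r := by
  change d x y < r ↔ d y x < r
  rw [hX.symm]

theorem qball_subset_qball (hX : IsHomogeneousType μ d κ C) {x y : X} {a b t : ℝ}
    (hxy : d x y < a) (ht : κ * (a + b) ≤ t) : qball d y b ⊆ qball d x t := fun w hw =>
  calc d x w ≤ κ * (d x y + d y w) := hX.triangle x w y
    _ < κ * (a + b) := mul_lt_mul_of_pos_left (add_lt_add hxy hw) (by linarith [hX.one_le_const])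
    _ ≤ t := ht

theorem measure_qball_two_pow_mul_le (hX : IsHomogeneousType μ d κ C) (x : X) {s : ℝ}
    (hs : 0 < s) (L : ℕ) :
    μ (qball d x (2 ^ L * s)) ≤ ENNReal.ofReal C ^ L * μ (qball d x s) := by
  induction L with
  | zero => simp
  | succ L ih =>
    calc μ (qball d x (2 ^ (L + 1) * s)) = μ (qball d x (2 * (2 ^ L * s))) := by ring_nf
      _ ≤ ENNReal.ofReal C * μ (qball d x (2 ^ L * s)) :=
          hX.measure_qball_two_mul_le x _ (by positivity)
      _ ≤ ENNReal.ofReal C * (ENNReal.ofReal C ^ L * μ (qball d x s)) := by gcongr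
      _ = ENNReal.ofReal C ^ (L + 1) * μ (qball d x s) := by ring

theorem measure_qball_le_ceil_mul (hX : IsHomogeneousType μ d κ C) (hC : 0 ≤ C) (x : X)
    {s t : ℝ} (hs : 0 < s) {L : ℕ} (hts : t ≤ 2 ^ L * s) :
    μ (qball d x t) ≤ ⌈C ^ L⌉₊ * μ (qball d x s) :=
  calc μ (qball d x t) ≤ μ (qball d x (2 ^ L * s)) := measure_mono (qball_mono hts)
    _ ≤ ENNReal.ofReal C ^ L * μ (qball d x s) := hX.measure_qball_two_pow_mul_le x hs L
    _ ≤ ⌈C ^ L⌉₊ * μ (qball d x s) := by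
        gcongr
        rw [← ENNReal.ofReal_pow hC, ← ENNReal.ofReal_natCast]
        exact ENNReal.ofReal_le_ofReal (Nat.le_ceil _)

end IsHomogeneousType

namespace IsCubeLayer

variable [MeasurableSpace X] {μ : Measure X} {d : X → X → ℝ} {κ C s R r : ℝ} {ι : Type*}
  {c : ι → X} {E : ι → Set X}

theorem subset_qball_of_mem (hE : IsCubeLayer d s R c E) (hX : IsHomogeneousType μ d κ C)
    (hRr : 2 * κ * R ≤ r) {j : ι} {y : X} (hy : y ∈ E j) : E j ⊆ qball d y r :=
  (hE.subset_qball j).trans <|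
    hX.qball_subset_qball (hX.mem_qball_comm.1 (hE.subset_qball j hy)) (by linarith)

theorem mem_qball_of_meets (hE : IsCubeLayer d s R c E) (hX : IsHomogeneousType μ d κ C)
    (hRr : R ≤ r) {j : ι} {y : X} (h : (E j ∩ qball d y r).Nonempty) :
    y ∈ qball d (c j) (2 * κ * r) := by
  obtain ⟨z, hzE, hzy⟩ := h
  exact hX.qball_subset_qball (hE.subset_qball j hzE)
    (by nlinarith [hX.one_le_const]) (hX.mem_qball_comm.1 hzy)

theorem qball_subset_of_meets (hE : IsCubeLayer d s R c E) (hX : IsHomogeneousType μ d κ C)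
    (hr : 0 ≤ r) (hRr : R ≤ r) {j : ι} {y : X} (h : (E j ∩ qball d y r).Nonempty) :
    qball d (c j) R ⊆ qball d y (3 * κ ^ 2 * r) :=
  have hκ := hX.one_le_const
  hX.qball_subset_qball (hX.mem_qball_comm.1 (hE.mem_qball_of_meets hX hRr h)) (by
    nlinarith [mul_nonneg (zero_le_one.trans hκ) (sub_nonneg.2 hRr),
      mul_nonneg (mul_nonneg (zero_le_one.trans hκ) (sub_nonneg.2 hκ)) hr])

theorem qball_subset_qball_of_meets (hE : IsCubeLayer d s R c E)
    (hX : IsHomogeneousType μ d κ C) (hr : 0 ≤ r) (hRr : R ≤ r) {j : ι} {y : X}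
    (h : (E j ∩ qball d y r).Nonempty) :
    qball d y (3 * κ ^ 2 * r) ⊆ qball d (c j) (5 * κ ^ 3 * r) :=
  have hκ := hX.one_le_const
  hX.qball_subset_qball (hE.mem_qball_of_meets hX hRr h) (by
    nlinarith [mul_nonneg (mul_nonneg (sq_nonneg κ) (sub_nonneg.2 hκ)) hr])

theorem measure_ne_zero (hE : IsCubeLayer d s R c E) (hX : IsHomogeneousType μ d κ C)
    (hs : 0 < s) (j : ι) : μ (E j) ≠ 0 :=
  ((hX.measure_qball_pos _ _ hs).trans_le (measure_mono (hE.qball_subset j))).ne'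

theorem measure_ne_top (hE : IsCubeLayer d s R c E) (hX : IsHomogeneousType μ d κ C) (j : ι) :
    μ (E j) ≠ ∞ :=
  ((measure_mono (hE.subset_qball j)).trans_lt (hX.measure_qball_lt_top _ _)).ne

theorem measure_qball_le_ceil_mul (hE : IsCubeLayer d s R c E) (hX : IsHomogeneousType μ d κ C)
    (hC : 0 ≤ C) (hs : 0 < s) {L : ℕ} (hrs : 5 * κ ^ 3 * r ≤ 2 ^ L * s) (j : ι) :
    μ (qball d (c j) (5 * κ ^ 3 * r)) ≤ ⌈C ^ L⌉₊ * μ (E j) :=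
  (hX.measure_qball_le_ceil_mul hC _ hs hrs).trans (by gcongr; exact hE.qball_subset j)

theorem card_le (hE : IsCubeLayer d s R c E) (hX : IsHomogeneousType μ d κ C) (hC : 0 ≤ C)
    (hs : 0 < s) (hr : 0 < r) (hRr : R ≤ r) {L : ℕ} (hrs : 5 * κ ^ 3 * r ≤ 2 ^ L * s) (y : X)
    (S : Finset ι) (hS : ∀ j ∈ S, (E j ∩ qball d y r).Nonempty) : S.card ≤ ⌈C ^ L⌉₊ := by
  set B := qball d y (3 * κ ^ 2 * r)
  have hsum : ∑ j ∈ S, μ (E j) ≤ μ B := by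
    rw [← measure_biUnion_finset (fun i _ j _ hij => hE.pairwise_disjoint hij)
      (fun j _ => hE.measurableSet j)]
    exact measure_mono <| iUnion₂_subset fun j hj =>
      (hE.subset_qball j).trans (hE.qball_subset_of_meets hX hr.le hRr (hS j hj))
  have hB : ∀ j ∈ S, μ B ≤ ⌈C ^ L⌉₊ * μ (E j) := fun j hj =>
    (measure_mono (hE.qball_subset_qball_of_meets hX hr.le hRr (hS j hj))).trans
      (hE.measure_qball_le_ceil_mul hX hC hs hrs j)
  have hcount : (S.card : ℝ≥0∞) * μ B ≤ ⌈C ^ L⌉₊ * μ B :=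
    calc (S.card : ℝ≥0∞) * μ B = ∑ _j ∈ S, μ B := by simp
      _ ≤ ∑ j ∈ S, ⌈C ^ L⌉₊ * μ (E j) := Finset.sum_le_sum hB
      _ = ⌈C ^ L⌉₊ * ∑ j ∈ S, μ (E j) := (Finset.mul_sum _ _ _).symm
      _ ≤ ⌈C ^ L⌉₊ * μ B := by gcongr
  have hB0 : 0 < 3 * κ ^ 2 * r := by have := hX.one_le_const; positivity
  exact_mod_cast (ENNReal.mul_le_mul_iff_left (hX.measure_qball_pos _ _ hB0).ne'
    (hX.measure_qball_lt_top _ _).ne).1 hcount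

theorem isComparablePartition (hE : IsCubeLayer d s R c E) (hX : IsHomogeneousType μ d κ C)
    (hC : 0 < C) (hs : 0 < s) (hsR : s ≤ R) (hRr : 2 * κ * R ≤ r) {L : ℕ}
    (hrs : 5 * κ ^ 3 * r ≤ 2 ^ L * s) : IsComparablePartition μ d r E ⌈C ^ L⌉₊ := by
  have hκ := hX.one_le_const
  have hRr' : R ≤ r := by nlinarith
  have hr : 0 < r := by linarith
  have hBr : ∀ y, μ (qball d y (3 * κ ^ 2 * r)) ≤ ⌈C ^ L⌉₊ * μ (qball d y r) := fun y =>
    hX.measure_qball_le_ceil_mul hC.le y hr (by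
      nlinarith [mul_nonneg (mul_nonneg (sq_nonneg κ) (sub_nonneg.2 hκ)) hr.le,
        mul_le_mul_of_nonneg_left (hsR.trans hRr') (pow_nonneg zero_le_two L : (0 : ℝ) ≤ 2 ^ L)])
  refine
    { one_le := Nat.one_le_ceil_iff.2 (by positivity)
      measurableSet := hE.measurableSet
      measurableSet_qball := fun y => hX.measurableSet_qball y r
      pairwise_disjoint := hE.pairwise_disjoint
      iUnion_eq := hE.iUnion_eq
      measure_ne_zero := hE.measure_ne_zero hX hs
      measure_ne_top := hE.measure_ne_top hX
      subset_qball := fun j y hy => hE.subset_qball_of_mem hX hRr hy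
      measure_qball_le := fun y j h => ?_
      measure_le_qball := fun y j h => ?_
      card_le := hE.card_le hX hC.le hs hr hRr' hrs
      exists_superset_thickening := fun j => ⟨qball d (c j) (2 * κ * r),
        hX.measurableSet_qball _ _, fun y h => hE.mem_qball_of_meets hX hRr' h, ?_⟩ }
  · calc μ (qball d y r) ≤ μ (qball d (c j) (5 * κ ^ 3 * r)) :=
          measure_mono <| (qball_mono (by nlinarith [one_le_pow₀ (n := 2) hκ])).trans
            (hE.qball_subset_qball_of_meets hX hr.le hRr' h)
      _ ≤ ⌈C ^ L⌉₊ * μ (E j) := hE.measure_qball_le_ceil_mul hX hC.le hs hrs j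
  · calc μ (E j) ≤ μ (qball d y (3 * κ ^ 2 * r)) :=
          measure_mono <| (hE.subset_qball j).trans (hE.qball_subset_of_meets hX hr.le hRr' h)
      _ ≤ ⌈C ^ L⌉₊ * μ (qball d y r) := hBr y
  · have hκ3 : κ ≤ κ ^ 3 := le_self_pow₀ hκ (by norm_num)
    exact (measure_mono (qball_mono (by nlinarith))).trans
      (hE.measure_qball_le_ceil_mul hX hC.le hs hrs j)

end IsCubeLayer

def weightedLocalNorm [MeasurableSpace X] (μ : Measure X) (A : Set X) (e : ℝ) (q : ℝ≥0∞)
    (f : X → ℂ) : ℝ≥0∞ :=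
  μ A ^ e * eLpNorm (A.indicator f) q μ

theorem weightedLocalNorm_add_one_div_rpow [MeasurableSpace X] {μ : Measure X} {A : Set X}
    (hA : μ A ≠ 0) (hA' : μ A ≠ ∞) (e : ℝ) (q : ℝ≥0∞) (f : X → ℂ) {p : ℝ} (hp : 0 < p) :
    weightedLocalNorm μ A (e + 1 / p) q f ^ p = μ A * weightedLocalNorm μ A e q f ^ p :=
  ENNReal.rpow_add_one_div_mul_rpow hA hA' hp

namespace IsComparablePartition

variable [MeasurableSpace X] {μ : Measure X} {d : X → X → ℝ} {r : ℝ} {ι : Type*}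
  {E : ι → Set X} {N : ℕ} {q : ℝ≥0∞} {e : ℝ}

theorem exists_finset_iff_meets (P : IsComparablePartition μ d r E N) (y : X) :
    ∃ S : Finset ι, S.card ≤ N ∧ ∀ j, j ∈ S ↔ (E j ∩ qball d y r).Nonempty := by
  have hfin : {j | (E j ∩ qball d y r).Nonempty}.Finite := by
    by_contra hinf
    obtain ⟨S, hS, hcard⟩ := Set.Infinite.exists_subset_card_eq hinf (N + 1)
    have := P.card_le y S fun j hj => hS hj
    omega
  exact ⟨hfin.toFinset, P.card_le y _ (by simp), by simp⟩

theorem rpow_measure_le (P : IsComparablePartition μ d r E N) {j : ι} {y : X}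
    (h : (E j ∩ qball d y r).Nonempty) (he : |e| ≤ 1) :
    μ (E j) ^ e ≤ N * μ (qball d y r) ^ e :=
  ENNReal.rpow_le_mul_rpow_of_le_mul (by exact_mod_cast P.one_le) (ENNReal.natCast_ne_top N)
    (P.measure_le_qball y j h) (P.measure_qball_le y j h) he

theorem rpow_measure_qball_le (P : IsComparablePartition μ d r E N) {j : ι} {y : X}
    (h : (E j ∩ qball d y r).Nonempty) (he : |e| ≤ 1) :
    μ (qball d y r) ^ e ≤ N * μ (E j) ^ e :=
  ENNReal.rpow_le_mul_rpow_of_le_mul (by exact_mod_cast P.one_le) (ENNReal.natCast_ne_top N)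
    (P.measure_qball_le y j h) (P.measure_le_qball y j h) he

theorem eLpNorm_qball_indicator_le (P : IsComparablePartition μ d r E N) {f : X → ℂ}
    (hf : AEStronglyMeasurable f μ) (hq : 1 ≤ q) {y : X} {S : Finset ι}
    (hS : ∀ j, (E j ∩ qball d y r).Nonempty → j ∈ S) :
    eLpNorm ((qball d y r).indicator f) q μ ≤ ∑ j ∈ S, eLpNorm ((E j).indicator f) q μ := by
  set g := (qball d y r).indicator f
  have hg : g = ∑ j ∈ S, (E j).indicator g := by
    ext x
    rw [Finset.sum_apply]
    obtain ⟨j₀, hj₀⟩ := mem_iUnion.1 (P.iUnion_eq ▸ mem_univ x)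
    by_cases hx : x ∈ qball d y r
    · rw [Finset.sum_eq_single_of_mem j₀ (hS j₀ ⟨x, hj₀, hx⟩) fun i _ hi =>
        indicator_of_notMem (fun hxi => disjoint_left.1 (P.pairwise_disjoint hi) hxi hj₀) _,
        indicator_of_mem hj₀]
    · simp [g, indicator_indicator, hx]
  calc eLpNorm g q μ ≤ ∑ j ∈ S, eLpNorm ((E j).indicator g) q μ := by
        conv_lhs => rw [hg]
        exact eLpNorm_sum_le (fun j _ =>
          ((hf.indicator (P.measurableSet_qball y)).indicator (P.measurableSet j))) hq
    _ ≤ ∑ j ∈ S, eLpNorm ((E j).indicator f) q μ := by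
        gcongr with j
        rw [indicator_indicator, inter_comm, ← indicator_indicator]
        exact eLpNorm_indicator_le _

theorem weightedLocalNorm_le (P : IsComparablePartition μ d r E N) (f : X → ℂ) {j : ι} {y : X}
    (hy : y ∈ E j) (he : |e| ≤ 1) :
    weightedLocalNorm μ (E j) e q f ≤ N * weightedLocalNorm μ (qball d y r) e q f := by
  have hsub := P.subset_qball j y hy
  rw [weightedLocalNorm, weightedLocalNorm, ← mul_assoc]
  gcongr
  · exact P.rpow_measure_le ⟨y, hy, hsub hy⟩ he
  · exact eLpNorm_indicator_le_of_subset hsub f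

theorem weightedLocalNorm_qball_le (P : IsComparablePartition μ d r E N) {f : X → ℂ}
    (hf : AEStronglyMeasurable f μ) (hq : 1 ≤ q) {y : X} {S : Finset ι}
    (hS : ∀ j, j ∈ S ↔ (E j ∩ qball d y r).Nonempty) (he : |e| ≤ 1) :
    weightedLocalNorm μ (qball d y r) e q f ≤ N * ∑ j ∈ S, weightedLocalNorm μ (E j) e q f :=
  calc weightedLocalNorm μ (qball d y r) e q f
      ≤ μ (qball d y r) ^ e * ∑ j ∈ S, eLpNorm ((E j).indicator f) q μ := by
        unfold weightedLocalNorm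
        gcongr
        exact P.eLpNorm_qball_indicator_le hf hq fun j => (hS j).2
    _ = ∑ j ∈ S, μ (qball d y r) ^ e * eLpNorm ((E j).indicator f) q μ := Finset.mul_sum _ _ _
    _ ≤ ∑ j ∈ S, N * weightedLocalNorm μ (E j) e q f :=
        Finset.sum_le_sum fun j hj => by
          rw [weightedLocalNorm, ← mul_assoc]
          exact mul_le_mul_left (P.rpow_measure_qball_le ((hS j).1 hj) he) _
    _ = N * ∑ j ∈ S, weightedLocalNorm μ (E j) e q f := (Finset.mul_sum _ _ _).symm

theorem iSup_weightedLocalNorm_le (P : IsComparablePartition μ d r E N) (f : X → ℂ)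
    (he : |e| ≤ 1) :
    ⨆ j, weightedLocalNorm μ (E j) e q f ≤ N * ⨆ y, weightedLocalNorm μ (qball d y r) e q f :=
  iSup_le fun j => by
    obtain ⟨y, hy⟩ := nonempty_of_measure_ne_zero (P.measure_ne_zero j)
    refine (P.weightedLocalNorm_le f hy he).trans ?_
    gcongr
    exact le_iSup (fun y => weightedLocalNorm μ (qball d y r) e q f) y

theorem iSup_weightedLocalNorm_qball_le (P : IsComparablePartition μ d r E N) {f : X → ℂ}
    (hf : AEStronglyMeasurable f μ) (hq : 1 ≤ q) (he : |e| ≤ 1) :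
    ⨆ y, weightedLocalNorm μ (qball d y r) e q f ≤
      N ^ 2 * ⨆ j, weightedLocalNorm μ (E j) e q f := by
  set D := ⨆ j, weightedLocalNorm μ (E j) e q f
  refine iSup_le fun y => ?_
  obtain ⟨S, hcard, hS⟩ := P.exists_finset_iff_meets y
  calc weightedLocalNorm μ (qball d y r) e q f
      ≤ N * ∑ j ∈ S, weightedLocalNorm μ (E j) e q f := P.weightedLocalNorm_qball_le hf hq hS he
    _ ≤ N * ∑ _j ∈ S, D := by
        gcongr with j
        exact le_iSup (fun j => weightedLocalNorm μ (E j) e q f) j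
    _ = N * (S.card * D) := by rw [Finset.sum_const, nsmul_eq_mul]
    _ ≤ N * (N * D) := by gcongr
    _ = N ^ 2 * D := by ring

theorem tsum_weightedLocalNorm_rpow_le [Countable ι] (P : IsComparablePartition μ d r E N)
    (f : X → ℂ) {p : ℝ} (hp : 1 ≤ p) (he : |e| ≤ 1) :
    (∑' j, weightedLocalNorm μ (E j) (e + 1 / p) q f ^ p) ^ (1 / p) ≤
      N * (∫⁻ y, weightedLocalNorm μ (qball d y r) e q f ^ p ∂μ) ^ (1 / p) := by
  have hp0 : 0 < p := by linarith
  have hsum : ∑' j, weightedLocalNorm μ (E j) (e + 1 / p) q f ^ p ≤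
      ∫⁻ y, (N : ℝ≥0∞) ^ p * weightedLocalNorm μ (qball d y r) e q f ^ p ∂μ := by
    simp only [weightedLocalNorm_add_one_div_rpow (P.measure_ne_zero _) (P.measure_ne_top _) _ _ _
      hp0]
    refine tsum_measure_mul_le_lintegral P.measurableSet P.pairwise_disjoint fun j y hy => ?_
    rw [← ENNReal.mul_rpow_of_nonneg _ _ hp0.le]
    exact ENNReal.rpow_le_rpow (P.weightedLocalNorm_le f hy he) hp0.le
  rw [lintegral_const_mul' _ _ (by simp [hp0.le])] at hsum
  rw [← ENNReal.rpow_mul_rpow_one_div hp0]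
  gcongr

theorem lintegral_weightedLocalNorm_qball_rpow_le [Countable ι]
    (P : IsComparablePartition μ d r E N) {f : X → ℂ} (hf : AEStronglyMeasurable f μ)
    (hq : 1 ≤ q) {p : ℝ} (hp : 1 ≤ p) (he : |e| ≤ 1) :
    (∫⁻ y, weightedLocalNorm μ (qball d y r) e q f ^ p ∂μ) ^ (1 / p) ≤
      N ^ 3 * (∑' j, weightedLocalNorm μ (E j) (e + 1 / p) q f ^ p) ^ (1 / p) := by
  have hp0 : 0 < p := by linarith
  set A := ∑' j, weightedLocalNorm μ (E j) (e + 1 / p) q f ^ p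
  set h : ι → ℝ≥0∞ := fun j => weightedLocalNorm μ (E j) e q f
  choose S hcard hS using P.exists_finset_iff_meets
  choose T hTmeas hT hTμ using P.exists_superset_thickening
  have hpt : ∀ y, weightedLocalNorm μ (qball d y r) e q f ^ p ≤
      ((N : ℝ≥0∞) ^ 2) ^ p * ∑ j ∈ S y, h j ^ p := fun y =>
    calc weightedLocalNorm μ (qball d y r) e q f ^ p
        ≤ (N * ∑ j ∈ S y, h j) ^ p :=
          ENNReal.rpow_le_rpow (P.weightedLocalNorm_qball_le hf hq (hS y) he) hp0.le
      _ ≤ (N : ℝ≥0∞) ^ p * ((N : ℝ≥0∞) ^ p * ∑ j ∈ S y, h j ^ p) := by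
        rw [ENNReal.mul_rpow_of_nonneg _ _ hp0.le]
        gcongr
        exact ENNReal.rpow_sum_le_mul_sum_rpow_of_card_le P.one_le (hcard y) hp h
      _ = ((N : ℝ≥0∞) ^ 2) ^ p * ∑ j ∈ S y, h j ^ p := by
        rw [← mul_assoc, ← ENNReal.mul_rpow_of_nonneg _ _ hp0.le, sq]
  have hint : ∫⁻ y, ∑ j ∈ S y, h j ^ p ∂μ ≤ N * A := by
    refine (lintegral_finset_sum_le_tsum_measure_mul hTmeas
      (fun y j hj => hT j y ((hS y j).1 hj)) _).trans ?_
    simp only [A, weightedLocalNorm_add_one_div_rpow (P.measure_ne_zero _) (P.measure_ne_top _)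
      _ _ _ hp0, ← ENNReal.tsum_mul_left, ← mul_assoc]
    exact ENNReal.tsum_le_tsum fun j => by gcongr; exact hTμ j
  have hN : (N : ℝ≥0∞) ^ (1 / p) ≤ N := by
    have h1 : (1 : ℝ≥0∞) ≤ N := by exact_mod_cast P.one_le
    simpa using ENNReal.rpow_le_rpow_of_exponent_le h1 ((div_le_one hp0).2 hp)
  calc (∫⁻ y, weightedLocalNorm μ (qball d y r) e q f ^ p ∂μ) ^ (1 / p)
      ≤ (((N : ℝ≥0∞) ^ 2) ^ p * ∫⁻ y, ∑ j ∈ S y, h j ^ p ∂μ) ^ (1 / p) := by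
        rw [← lintegral_const_mul' _ _ (by simp [hp0.le])]
        gcongr with y
        exact hpt y
    _ ≤ (((N : ℝ≥0∞) ^ 2) ^ p * (N * A)) ^ (1 / p) := by gcongr
    _ = N ^ 2 * ((N : ℝ≥0∞) ^ (1 / p) * A ^ (1 / p)) := by
        rw [ENNReal.rpow_mul_rpow_one_div hp0, ENNReal.mul_rpow_of_nonneg _ _ (by positivity)]
    _ ≤ N ^ 2 * (N * A ^ (1 / p)) := by gcongr
    _ = N ^ 3 * A ^ (1 / p) := by ring

variable {p α : ℝ≥0∞}

theorem dyadicAmalgamNorm_le [Countable ι] (P : IsComparablePartition μ d r E N) (f : X → ℂ)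
    (hq : 1 ≤ q) (hqα : q ≤ α) (hαp : α ≤ p) :
    dyadicAmalgamNorm μ E q p α f ≤ N * amalgamNorm μ d q p α r f := by
  obtain ⟨he₁, he₂⟩ := abs_amalgam_exponents_le hq hqα hαp
  unfold dyadicAmalgamNorm amalgamNorm
  split_ifs with hp
  · exact P.iSup_weightedLocalNorm_le f he₁
  · have hp1 : 1 ≤ p.toReal := by
      simpa using ENNReal.toReal_mono hp (hq.trans (hqα.trans hαp))
    rw [show 1 / α.toReal - 1 / q.toReal =
      1 / α.toReal - 1 / p.toReal - 1 / q.toReal + 1 / p.toReal by ring]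
    exact P.tsum_weightedLocalNorm_rpow_le f hp1 he₂

theorem amalgamNorm_le [Countable ι] (P : IsComparablePartition μ d r E N) {f : X → ℂ}
    (hf : AEStronglyMeasurable f μ) (hq : 1 ≤ q) (hqα : q ≤ α) (hαp : α ≤ p) :
    amalgamNorm μ d q p α r f ≤ N ^ 3 * dyadicAmalgamNorm μ E q p α f := by
  obtain ⟨he₁, he₂⟩ := abs_amalgam_exponents_le hq hqα hαp
  unfold dyadicAmalgamNorm amalgamNorm
  split_ifs with hp
  · refine (P.iSup_weightedLocalNorm_qball_le hf hq he₁).trans (mul_le_mul_left ?_ _)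
    exact pow_le_pow_right₀ (by exact_mod_cast P.one_le) (by norm_num)
  · have hp1 : 1 ≤ p.toReal := by
      simpa using ENNReal.toReal_mono hp (hq.trans (hqα.trans hαp))
    rw [show 1 / α.toReal - 1 / q.toReal =
      1 / α.toReal - 1 / p.toReal - 1 / q.toReal + 1 / p.toReal by ring]
    exact P.lintegral_weightedLocalNorm_qball_rpow_le hf hq hp1 he₂

end IsComparablePartition
theorem generation_radius_bounds {κ ρ r : ℝ} {m : ℤ} {L : ℕ} (hκ : 0 < κ) (hρ : 0 < ρ)
    (hm₁ : ρ ^ (m + 1) ≤ r / (2 * κ)) (hm₂ : r / (2 * κ) < ρ ^ (m + 2))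
    (hL : 10 * κ ^ 4 * ρ ^ 2 ≤ 2 ^ L) :
    2 * κ * ρ ^ (m + 1) ≤ r ∧ 5 * κ ^ 3 * r ≤ 2 ^ L * ρ ^ m := by
  rw [le_div_iff₀ (by positivity)] at hm₁
  rw [div_lt_iff₀ (by positivity), zpow_add₀ hρ.ne', zpow_two] at hm₂
  refine ⟨by linarith, ?_⟩
  calc 5 * κ ^ 3 * r ≤ 5 * κ ^ 3 * (ρ ^ m * (ρ * ρ) * (2 * κ)) := by gcongr
    _ = 10 * κ ^ 4 * ρ ^ 2 * ρ ^ m := by ring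
    _ ≤ 2 ^ L * ρ ^ m := by gcongr

theorem amalgam_dyadic_equivalence_general [MeasurableSpace X] (μ : Measure X) (d : X → X → ℝ)
    (κ : ℝ) (hκ : 1 ≤ κ)
    (hsymm : ∀ x y, d x y = d y x) (hd0 : ∀ x, d x x = 0)
    (htri : ∀ x y z, d x y ≤ κ * (d x z + d z y))
    (hmeas : ∀ x r, MeasurableSet (qball d x r))
    (hpos : ∀ x r, 0 < r → 0 < μ (qball d x r))
    (hfin : ∀ x r, μ (qball d x r) < ∞)
    (C' : ℝ) (hC' : 1 < C')
    (hdouble : ∀ x r, 0 < r → μ (qball d x (2 * r)) ≤ ENNReal.ofReal C' * μ (qball d x r))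
    (ρ : ℝ) (hρ : 1 < ρ)
    (q p α : ℝ≥0∞) (hq : 1 ≤ q) (hqα : q ≤ α) (hαp : α ≤ p) :
    ∃ C₁ C₂ : ℝ, 0 < C₁ ∧ 0 < C₂ ∧
      ∀ (r : ℝ), 0 < r → ∀ (m : ℤ),
        ρ ^ (m + 1) ≤ r / (2 * κ) → r / (2 * κ) < ρ ^ (m + 2) →
      ∀ (ι : Type) (_ : Countable ι) (c : ι → X) (E : ι → Set X),
        (∀ j, MeasurableSet (E j)) →
        (∀ j, qball d (c j) (ρ ^ m) ⊆ E j ∧ E j ⊆ qball d (c j) (ρ ^ (m + 1))) →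
        Pairwise (Function.onFun Disjoint E) →
        (⋃ j, E j) = Set.univ →
      ∀ (f : X → ℂ), Measurable f →
        ENNReal.ofReal C₁ * amalgamNorm μ d q p α r f ≤ dyadicAmalgamNorm μ E q p α f ∧
        dyadicAmalgamNorm μ E q p α f ≤ ENNReal.ofReal C₂ * amalgamNorm μ d q p α r f := by
  have hX : IsHomogeneousType μ d κ C' := ⟨hκ, hsymm, hd0, htri, hmeas, hpos, hfin, hdouble⟩
  obtain ⟨L, hL⟩ : ∃ L : ℕ, 10 * κ ^ 4 * ρ ^ 2 ≤ 2 ^ L :=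
    (pow_unbounded_of_one_lt _ (one_lt_two : (1 : ℝ) < 2)).imp fun _ => le_of_lt
  set N := ⌈C' ^ L⌉₊
  have hN : 0 < N := Nat.one_le_ceil_iff.2 (by positivity)
  refine ⟨((N : ℝ) ^ 3)⁻¹, N, by positivity, by positivity, ?_⟩
  intro r _ m hm₁ hm₂ ι _ c E hEmeas hEsub hEdisj hEcover f hf
  have hE : IsCubeLayer d (ρ ^ m) (ρ ^ (m + 1)) c E :=
    ⟨hEmeas, fun j => (hEsub j).1, fun j => (hEsub j).2, hEdisj, hEcover⟩
  obtain ⟨hRr, hrs⟩ := generation_radius_bounds (by linarith) (by linarith) hm₁ hm₂ hL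
  have hP := hE.isComparablePartition hX (by linarith) (zpow_pos (by linarith) m)
    (zpow_le_zpow_right₀ hρ.le (by omega)) hRr hrs
  refine ⟨?_, by simpa using hP.dyadicAmalgamNorm_le f hq hqα hαp⟩
  calc ENNReal.ofReal ((N : ℝ) ^ 3)⁻¹ * amalgamNorm μ d q p α r f
      ≤ ((N : ℝ≥0∞) ^ 3)⁻¹ * (N ^ 3 * dyadicAmalgamNorm μ E q p α f) := by
        rw [ENNReal.ofReal_inv_of_pos (by positivity), ENNReal.ofReal_pow (by positivity),
          ENNReal.ofReal_natCast]
        gcongr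
        exact hP.amalgamNorm_le hf.aestronglyMeasurable hq hqα hαp
    _ = dyadicAmalgamNorm μ E q p α f := by
        rw [← mul_assoc, ENNReal.inv_mul_cancel (by positivity) (by simp), one_mul]

/-- equivalence of the continuous amalgam norm `_r‖·‖_{q,p,α}` and the
dyadic amalgam norm at generation `m_r`, with constants independent of `f` and `r`. -/
theorem amalgam_dyadic_equivalence [MeasurableSpace X] (μ : Measure X) (d : X → X → ℝ)
    (κ : ℝ) (hκ : 1 ≤ κ)
    (hsymm : ∀ x y, d x y = d y x) (hd0 : ∀ x, d x x = 0) (hdnn : ∀ x y, 0 ≤ d x y)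
    (htri : ∀ x y z, d x y ≤ κ * (d x z + d z y))
    (hmeas : ∀ x r, MeasurableSet (qball d x r))
    (hpos : ∀ x r, 0 < r → 0 < μ (qball d x r))
    (hfin : ∀ x r, μ (qball d x r) < ∞)
    (hXinf : μ Set.univ = ∞)
    (C' : ℝ) (hC' : 1 < C')
    (hdouble : ∀ x r, 0 < r → μ (qball d x (2 * r)) ≤ ENNReal.ofReal C' * μ (qball d x r))
    (ρ : ℝ) (hρ : 1 < ρ)
    (q p α : ℝ≥0∞) (hq : 1 ≤ q) (hqα : q ≤ α) (hαp : α ≤ p) :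
    ∃ C₁ C₂ : ℝ, 0 < C₁ ∧ 0 < C₂ ∧
      ∀ (r : ℝ), 0 < r → ∀ (m : ℤ),
        ρ ^ (m + 1) ≤ r / (2 * κ) → r / (2 * κ) < ρ ^ (m + 2) →
      ∀ (ι : Type) (_ : Countable ι) (c : ι → X) (E : ι → Set X),
        (∀ j, MeasurableSet (E j)) →
        (∀ j, qball d (c j) (ρ ^ m) ⊆ E j ∧ E j ⊆ qball d (c j) (ρ ^ (m + 1))) →
        Pairwise (Function.onFun Disjoint E) →
        (⋃ j, E j) = Set.univ →
      ∀ (f : X → ℂ), Measurable f →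
        ENNReal.ofReal C₁ * amalgamNorm μ d q p α r f ≤ dyadicAmalgamNorm μ E q p α f ∧
        dyadicAmalgamNorm μ E q p α f ≤ ENNReal.ofReal C₂ * amalgamNorm μ d q p α r f :=
  amalgam_dyadic_equivalence_general μ d κ hκ hsymm hd0 htri hmeas hpos hfin C' hC' hdouble ρ hρ q p
    α hq hqα hαp
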